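/- arXiv:1909.09000 — 3 statements merged into one kernel-verified Lean document; each statement's English description precedes it below -/
import Mathlib

section
/- Let δ > 0, β ∈ ℝ, and let R : [0,∞) → ℂ be continuous with ∫_0^∞ |R(s)|² e^{-δ s} ds < ∞. Define Ψ(s) = ∫_0^s e^{-iβ(s-y)} R(y) dy. Then ∫_0^∞ |Ψ(s)|² e^{-δ s} ds < ∞, and δ (∫_0^∞ |Ψ(s)|² e^{-δ s} ds)^{1/2} ≤ 2 (∫_0^∞ |R(s)|² e^{-δ s} ds)^{1/2}. -/
/-!
Since `|e^{-iβ(s-y)}| = 1`, we have `|Ψ(s)| ≤ ∫₀ˢ |R|`, hence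
`e^{-δs/2} |Ψ(s)| ≤ ∫ k(s - y) g(y) dy` with `g(y) = e^{-δy/2} |R(y)| 1_{y > 0}` and the kernel
`k(t) = e^{-δt/2} 1_{t ≥ 0}`, whose integral is `2/δ`. Young's convolution inequality
`‖k ∗ g‖₂ ≤ ‖k‖₁ ‖g‖₂` (proved by the Schur test: Cauchy–Schwarz against the kernel, then Tonelli)
gives `‖Ψ‖_{L²_w} ≤ (2/δ) ‖R‖_{L²_w}`. Everything is done with lower Lebesgue integrals, so
integrability of `|Ψ|² w` comes out of the finiteness of the bound.
-/

open MeasureTheory Set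
open scoped ENNReal

section LIntegral

variable {α : Type*} [MeasurableSpace α] {μ : Measure α}

theorem sq_lintegral_mul_le_lintegral_mul_lintegral_mul_sq {f g : α → ℝ≥0∞}
    (hf : AEMeasurable f μ) (hg : AEMeasurable g μ) :
    (∫⁻ a, f a * g a ∂μ) ^ 2 ≤ (∫⁻ a, f a ∂μ) * ∫⁻ a, f a * g a ^ 2 ∂μ := by
  have hsplit : ∀ a, f a * g a = f a ^ (2⁻¹ : ℝ) * (f a * g a ^ 2) ^ (2⁻¹ : ℝ) := fun a => by
    rw [ENNReal.mul_rpow_of_nonneg _ _ (by norm_num), ← mul_assoc,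
      ← ENNReal.rpow_add_of_nonneg _ _ (by norm_num) (by norm_num),
      ← Nat.cast_ofNat, ENNReal.pow_rpow_inv_natCast two_ne_zero]
    norm_num
  calc (∫⁻ a, f a * g a ∂μ) ^ 2
      ≤ ((∫⁻ a, f a ∂μ) ^ (2⁻¹ : ℝ) * (∫⁻ a, f a * g a ^ 2 ∂μ) ^ (2⁻¹ : ℝ)) ^ 2 := by
        rw [lintegral_congr hsplit]
        gcongr
        exact ENNReal.lintegral_mul_norm_pow_le hf (hf.mul (hg.pow_const 2))
          (by norm_num) (by norm_num) (by norm_num)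
    _ = (∫⁻ a, f a ∂μ) * ∫⁻ a, f a * g a ^ 2 ∂μ := by
      rw [mul_pow, ← Nat.cast_ofNat, ENNReal.rpow_inv_natCast_pow two_ne_zero,
        ENNReal.rpow_inv_natCast_pow two_ne_zero]

theorem integrable_and_integral_le_of_lintegral_le {f g : α → ℝ}
    (hf : AEStronglyMeasurable f μ) (hf0 : 0 ≤ f) (hg : Integrable g μ) (hg0 : 0 ≤ g)
    {C : ℝ} (hC : 0 ≤ C)
    (h : ∫⁻ a, ENNReal.ofReal (f a) ∂μ ≤ ENNReal.ofReal C * ∫⁻ a, ENNReal.ofReal (g a) ∂μ) :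
    Integrable f μ ∧ ∫ a, f a ∂μ ≤ C * ∫ a, g a ∂μ := by
  have hbound_ne_top := ENNReal.mul_ne_top (ENNReal.ofReal_ne_top (r := C)) hg.lintegral_lt_top.ne
  refine ⟨⟨hf, (hasFiniteIntegral_iff_ofReal (ae_of_all _ hf0)).2
    (h.trans_lt hbound_ne_top.lt_top)⟩, ?_⟩
  rw [integral_eq_lintegral_of_nonneg_ae (ae_of_all _ hf0) hf,
    integral_eq_lintegral_of_nonneg_ae (ae_of_all _ hg0) hg.aestronglyMeasurable]
  simpa [ENNReal.toReal_mul, hC] using ENNReal.toReal_mono hbound_ne_top h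

end LIntegral

section Schur

variable {α β : Type*} [MeasurableSpace α] [MeasurableSpace β] {μ : Measure α} {ν : Measure β}
  [SFinite μ] [SFinite ν]

/-- The Schur test. -/
theorem lintegral_sq_lintegral_mul_le {K : α → β → ℝ≥0∞} (hK : Measurable (Function.uncurry K))
    {g : β → ℝ≥0∞} (hg : Measurable g) {A B : ℝ≥0∞} (hA : ∀ x, ∫⁻ y, K x y ∂ν ≤ A)
    (hB : ∀ y, ∫⁻ x, K x y ∂μ ≤ B) :
    ∫⁻ x, (∫⁻ y, K x y * g y ∂ν) ^ 2 ∂μ ≤ A * B * ∫⁻ y, g y ^ 2 ∂ν := by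
  have hKg : Measurable (Function.uncurry fun x y => K x y * g y ^ 2) :=
    hK.mul ((hg.pow_const 2).comp measurable_snd)
  calc ∫⁻ x, (∫⁻ y, K x y * g y ∂ν) ^ 2 ∂μ
      ≤ ∫⁻ x, A * ∫⁻ y, K x y * g y ^ 2 ∂ν ∂μ := lintegral_mono fun x =>
        (sq_lintegral_mul_le_lintegral_mul_lintegral_mul_sq hK.of_uncurry_left.aemeasurable
          hg.aemeasurable).trans (mul_le_mul_left (hA x) _)
    _ = A * ∫⁻ y, ∫⁻ x, K x y * g y ^ 2 ∂μ ∂ν := by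
      rw [lintegral_const_mul _ hKg.lintegral_prod_right,
        lintegral_lintegral_swap hKg.aemeasurable]
    _ ≤ A * ∫⁻ y, B * g y ^ 2 ∂ν := by
      gcongr with y
      rw [lintegral_mul_const _ hK.of_uncurry_right]
      exact mul_le_mul_left (hB y) _
    _ = A * B * ∫⁻ y, g y ^ 2 ∂ν := by
      rw [lintegral_const_mul _ (hg.pow_const 2), mul_assoc]

end Schur

section Young

variable {G : Type*} [AddGroup G] [MeasurableSpace G] [MeasurableAdd G] [MeasurableNeg G]
  [MeasurableSub₂ G] {μ : Measure G} [SFinite μ] [μ.IsAddLeftInvariant] [μ.IsAddRightInvariant]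
  [μ.IsNegInvariant]

/-- Young's convolution inequality for the exponents `(1, 2; 2)`. -/
theorem lintegral_sq_lintegral_sub_mul_le {k g : G → ℝ≥0∞} (hk : Measurable k)
    (hg : Measurable g) :
    ∫⁻ x, (∫⁻ y, k (x - y) * g y ∂μ) ^ 2 ∂μ ≤ (∫⁻ t, k t ∂μ) ^ 2 * ∫⁻ y, g y ^ 2 ∂μ := by
  rw [sq (∫⁻ t, k t ∂μ)]
  exact lintegral_sq_lintegral_mul_le (K := fun x y => k (x - y)) (hk.comp measurable_sub) hg
    (fun x => (lintegral_sub_left_eq_self k x).le) (fun y => (lintegral_sub_right_eq_self k y).le)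

end Young

theorem Continuous.intervalIntegral_diag {E : Type*} [NormedAddCommGroup E] [NormedSpace ℝ E]
    {F : ℝ → ℝ → E} (hF : Continuous (Function.uncurry F)) (a : ℝ) :
    Continuous fun s => ∫ y in a..s, F s y :=
  (intervalIntegral.continuous_parametric_primitive_of_continuous hF).comp
    (continuous_id.prodMk continuous_id)

theorem enorm_intervalIntegral_exp_mul_I_le (β s : ℝ) (hs : 0 ≤ s) (R : ℝ → ℂ) :
    ‖∫ y in (0:ℝ)..s, Complex.exp (-(Complex.I * β) * (s - y)) * R y‖ₑ ≤
      ∫⁻ y in Ioc 0 s, ‖R y‖ₑ := by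
  rw [intervalIntegral.integral_of_le hs]
  refine (enorm_integral_le_lintegral_enorm _).trans_eq (lintegral_congr fun y => ?_)
  have : -(Complex.I * β) * (s - y) = ((-β * (s - y) : ℝ) : ℂ) * Complex.I := by push_cast; ring
  rw [enorm_mul, this, ← ofReal_norm, Complex.norm_exp_ofReal_mul_I, ENNReal.ofReal_one, one_mul]

theorem lintegral_indicator_Ici_exp_neg_mul {c : ℝ} (hc : 0 < c) :
    ∫⁻ t, (Ici 0).indicator (fun t => ENNReal.ofReal (Real.exp (-c * t))) t =
      ENNReal.ofReal c⁻¹ := by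
  rw [lintegral_indicator measurableSet_Ici, ← setLIntegral_congr Ioi_ae_eq_Ici,
    ← ofReal_integral_eq_lintegral_ofReal (integrableOn_exp_mul_Ioi (neg_lt_zero.2 hc) 0)
      (ae_of_all _ fun t => (Real.exp_pos _).le), integral_exp_mul_Ioi (neg_lt_zero.2 hc)]
  simp [neg_div, div_neg]

theorem lintegral_indicator_exp_sub_mul_indicator (c s : ℝ) (r : ℝ → ℝ≥0∞) :
    ∫⁻ y, (Ici 0).indicator (fun t => ENNReal.ofReal (Real.exp (-c * t))) (s - y) *
        (Ioi 0).indicator (fun y => ENNReal.ofReal (Real.exp (-c * y)) * r y) y =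
      ENNReal.ofReal (Real.exp (-c * s)) * ∫⁻ y in Ioc 0 s, r y := by
  rw [← lintegral_const_mul' _ _ ENNReal.ofReal_ne_top, ← lintegral_indicator measurableSet_Ioc]
  refine lintegral_congr fun y => ?_
  by_cases hy : y ∈ Ioc 0 s
  · have hexp : Real.exp (-c * (s - y)) * Real.exp (-c * y) = Real.exp (-c * s) := by
      rw [← Real.exp_add]; ring_nf
    rw [indicator_of_mem (show s - y ∈ Ici 0 by simpa using hy.2),
      indicator_of_mem (show y ∈ Ioi 0 from hy.1), indicator_of_mem hy, ← mul_assoc,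
      ← ENNReal.ofReal_mul (Real.exp_pos _).le, hexp]
  · rw [indicator_of_notMem hy]
    simp only [mem_Ioc, not_and_or, not_le, not_lt] at hy
    rcases hy with hy | hy
    · simp [indicator_of_notMem (show y ∉ Ioi 0 from not_lt.2 hy)]
    · simp [indicator_of_notMem (show s - y ∉ Ici 0 by simp; linarith)]

theorem ofReal_exp_half_mul_sq (δ s : ℝ) (a : ℝ≥0∞) :
    (ENNReal.ofReal (Real.exp (-(δ / 2) * s)) * a) ^ 2 =
      ENNReal.ofReal (Real.exp (-δ * s)) * a ^ 2 := by
  rw [mul_pow, ← ENNReal.ofReal_pow (Real.exp_pos _).le, ← Real.exp_nat_mul]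
  ring_nf

/-- A weighted Hardy inequality. -/
theorem lintegral_exp_mul_sq_lintegral_Ioc_le {δ : ℝ} (hδ : 0 < δ) {r : ℝ → ℝ≥0∞}
    (hr : Measurable r) :
    ∫⁻ s in Ioi 0, ENNReal.ofReal (Real.exp (-δ * s)) * (∫⁻ y in Ioc 0 s, r y) ^ 2 ≤
      ENNReal.ofReal ((2 / δ) ^ 2) *
        ∫⁻ y in Ioi 0, ENNReal.ofReal (Real.exp (-δ * y)) * r y ^ 2 := by
  set k : ℝ → ℝ≥0∞ := (Ici 0).indicator fun t => ENNReal.ofReal (Real.exp (-(δ / 2) * t))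
  set g : ℝ → ℝ≥0∞ := (Ioi 0).indicator fun y => ENNReal.ofReal (Real.exp (-(δ / 2) * y)) * r y
  have hg_sq : ∀ y, g y ^ 2 =
      (Ioi 0).indicator (fun y => ENNReal.ofReal (Real.exp (-δ * y)) * r y ^ 2) y := fun y => by
    by_cases hy : y ∈ Ioi 0
    · simp only [g, indicator_of_mem hy, ofReal_exp_half_mul_sq]
    · simp [g, hy]
  calc ∫⁻ s in Ioi 0, ENNReal.ofReal (Real.exp (-δ * s)) * (∫⁻ y in Ioc 0 s, r y) ^ 2
      = ∫⁻ s in Ioi 0, (∫⁻ y, k (s - y) * g y) ^ 2 := by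
        simp only [k, g, lintegral_indicator_exp_sub_mul_indicator, ofReal_exp_half_mul_sq]
    _ ≤ ∫⁻ s, (∫⁻ y, k (s - y) * g y) ^ 2 := setLIntegral_le_lintegral _ _
    _ ≤ (∫⁻ t, k t) ^ 2 * ∫⁻ y, g y ^ 2 :=
        lintegral_sq_lintegral_sub_mul_le (by measurability) (by measurability)
    _ = _ := by
      rw [lintegral_indicator_Ici_exp_neg_mul (by positivity), lintegral_congr hg_sq,
        lintegral_indicator measurableSet_Ioi, ENNReal.ofReal_pow (by positivity)]
      norm_num

/-- For Ψ(s) = ∫_0^s e^{-iβ(s-y)} R(y) dy with R ∈ L²_w, one has Ψ ∈ L²_w and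
δ ‖Ψ‖_{L²_w} ≤ 2 ‖R‖_{L²_w} where w(s) = e^{-δ s}. -/
theorem stmt8 (δ β : ℝ) (hδ : 0 < δ) (R : ℝ → ℂ) (hR : Continuous R)
    (hRint : IntegrableOn (fun s : ℝ => ‖R s‖ ^ 2 * Real.exp (-δ * s)) (Set.Ioi 0))
    (Ψ : ℝ → ℂ)
    (hΨ : ∀ s : ℝ, Ψ s = ∫ y in (0:ℝ)..s, Complex.exp (-(Complex.I * β) * (s - y)) * R y) :
    IntegrableOn (fun s : ℝ => ‖Ψ s‖ ^ 2 * Real.exp (-δ * s)) (Set.Ioi 0) ∧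
    δ * Real.sqrt (∫ s in Set.Ioi (0:ℝ), ‖Ψ s‖ ^ 2 * Real.exp (-δ * s))
      ≤ 2 * Real.sqrt (∫ s in Set.Ioi (0:ℝ), ‖R s‖ ^ 2 * Real.exp (-δ * s)) := by
  have hΨc : Continuous Ψ := by
    rw [funext hΨ]
    exact Continuous.intervalIntegral_diag (by fun_prop) 0
  have hweight : ∀ (z : ℂ) (s : ℝ), ENNReal.ofReal (‖z‖ ^ 2 * Real.exp (-δ * s)) =
      ENNReal.ofReal (Real.exp (-δ * s)) * ‖z‖ₑ ^ 2 := fun z s => by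
    rw [mul_comm, ENNReal.ofReal_mul (Real.exp_pos _).le, ENNReal.ofReal_pow (norm_nonneg _),
      ofReal_norm]
  have hlintegral : ∫⁻ s in Ioi 0, ENNReal.ofReal (‖Ψ s‖ ^ 2 * Real.exp (-δ * s)) ≤
      ENNReal.ofReal ((2 / δ) ^ 2) *
        ∫⁻ y in Ioi 0, ENNReal.ofReal (‖R y‖ ^ 2 * Real.exp (-δ * y)) := by
    simp only [hweight]
    refine le_trans (setLIntegral_mono' measurableSet_Ioi fun s hs => ?_)
      (lintegral_exp_mul_sq_lintegral_Ioc_le hδ hR.enorm.measurable)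
    rw [hΨ]
    gcongr
    exact enorm_intervalIntegral_exp_mul_I_le β s hs.le R
  obtain ⟨hΨint, hle⟩ := integrable_and_integral_le_of_lintegral_le
    (by fun_prop : Continuous fun s => ‖Ψ s‖ ^ 2 * Real.exp (-δ * s)).aestronglyMeasurable
    (fun s => by positivity) hRint (fun s => by positivity) (by positivity) hlintegral
  refine ⟨hΨint, ?_⟩
  calc δ * √(∫ s in Ioi 0, ‖Ψ s‖ ^ 2 * Real.exp (-δ * s))
      ≤ δ * √((2 / δ) ^ 2 * ∫ s in Ioi 0, ‖R s‖ ^ 2 * Real.exp (-δ * s)) := by gcongr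
    _ = 2 * √(∫ s in Ioi 0, ‖R s‖ ^ 2 * Real.exp (-δ * s)) := by
      rw [Real.sqrt_mul' _ (integral_nonneg fun s => by positivity), Real.sqrt_sq (by positivity)]
      field_simp
end

section
/- Let ν belong to the class K, with constants C > 0 and δ > 0 such that |ν''(t)| ≤ C e^{-δ t} for all t ≥ 0, let λ ∈ ℂ with Re λ ≥ 0, and let R : [0,∞) → ℂ be continuous with ∫_0^∞ |R(y)|² e^{-δ y} dy < ∞. Then the iterated integral ∫_0^∞ ν''(s) ∫_0^s e^{-λ(s-y)} R(y) dy ds converges absolutely and its modulus is at most (C/δ^{3/2}) (∫_0^∞ |R(y)|² e^{-δ y} dy)^{1/2}. -/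
open MeasureTheory Filter Set Real

/-!
For `y ≤ s` and `Re λ ≥ 0` we have `|e^{-λ(s-y)}| ≤ 1`, so the integrand is bounded by
`C e^{-δs} H(s)` with `H(s) = ∫_0^s |R|`. Integration by parts gives
`δ ∫_0^T e^{-δs} H(s) ds ≤ ∫_0^T e^{-δs} |R(s)| ds`, and Cauchy–Schwarz with
`e^{-δs} = e^{-δs/2} · e^{-δs/2}` bounds the right side by `δ^{-1/2} ‖R‖_{L²_w}`.
These bounds are uniform in `T`, which gives absolute convergence and the estimate at once.
-/

lemma integral_mul_le_sqrt_mul_sqrt {α : Type*} [MeasurableSpace α] {μ : Measure α}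
    {f g : α → ℝ} (hf : 0 ≤ᵐ[μ] f) (hg : 0 ≤ᵐ[μ] g) (hf2 : MemLp f 2 μ) (hg2 : MemLp g 2 μ) :
    ∫ x, f x * g x ∂μ ≤ √(∫ x, f x ^ 2 ∂μ) * √(∫ x, g x ^ 2 ∂μ) := by
  have h2 : ENNReal.ofReal 2 = 2 := by norm_num
  have := integral_mul_le_Lp_mul_Lq_of_nonneg Real.HolderConjugate.two_two hf hg
    (h2 ▸ hf2) (h2 ▸ hg2)
  rw [sqrt_eq_rpow, sqrt_eq_rpow]
  simpa only [rpow_two] using this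

lemma norm_intervalIntegral_cexp_neg_mul_sub_mul_le {z : ℂ} (hz : 0 ≤ z.re) {R : ℝ → ℂ}
    {s : ℝ} (hs : 0 ≤ s) (hR : IntervalIntegrable R volume 0 s) :
    ‖∫ y in (0:ℝ)..s, Complex.exp (-z * (s - y)) * R y‖ ≤ ∫ y in (0:ℝ)..s, ‖R y‖ := by
  refine intervalIntegral.norm_integral_le_of_norm_le hs (ae_of_all _ fun y hy => ?_) hR.norm
  have hexp : ‖Complex.exp (-z * (s - y))‖ ≤ 1 := by
    rw [Complex.norm_exp, exp_le_one_iff]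
    have : 0 ≤ z.re * (s - y) := mul_nonneg hz (sub_nonneg.mpr hy.2)
    simpa using this
  simpa [norm_mul] using mul_le_of_le_one_left (norm_nonneg (R y)) hexp

lemma mul_intervalIntegral_exp_mul_primitive_le {g : ℝ → ℝ} (hg : Continuous g)
    (hg0 : ∀ y, 0 ≤ g y) (δ : ℝ) {T : ℝ} (hT : 0 ≤ T) :
    δ * ∫ s in (0:ℝ)..T, exp (-δ * s) * ∫ y in (0:ℝ)..s, g y
      ≤ ∫ s in (0:ℝ)..T, exp (-δ * s) * g s := by
  set H : ℝ → ℝ := fun s => ∫ y in (0:ℝ)..s, g y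
  have hH : ∀ s, HasDerivAt H (g s) s := fun s => hg.integral_hasStrictDerivAt 0 s |>.hasDerivAt
  have hderiv : ∀ s, HasDerivAt (fun t => exp (-δ * t) * H t)
      (exp (-δ * s) * g s - δ * (exp (-δ * s) * H s)) s := fun s => by
    refine (((hasDerivAt_id' s).const_mul (-δ)).exp.mul (hH s)).congr_deriv ?_
    ring
  have hi₁ : IntervalIntegrable (fun s => exp (-δ * s) * g s) volume 0 T :=
    (by fun_prop : Continuous _).intervalIntegrable 0 T
  have hi₂ : IntervalIntegrable (fun s => δ * (exp (-δ * s) * H s)) volume 0 T :=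
    (by fun_prop : Continuous _).intervalIntegrable 0 T
  -- integrating the derivative of `e^{-δs} H(s)` leaves the nonnegative boundary term
  have hFTC := intervalIntegral.integral_eq_sub_of_hasDerivAt (fun s _ => hderiv s) (hi₁.sub hi₂)
  rw [intervalIntegral.integral_sub hi₁ hi₂, intervalIntegral.integral_const_mul] at hFTC
  have hHT : 0 ≤ H T := intervalIntegral.integral_nonneg hT fun y _ => hg0 y
  have hH0 : H 0 = 0 := intervalIntegral.integral_same
  rw [hH0, mul_zero, sub_zero] at hFTC
  change δ * ∫ s in (0:ℝ)..T, exp (-δ * s) * H s ≤ _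
  linarith [mul_nonneg (exp_pos (-δ * T)).le hHT]

lemma intervalIntegral_exp_mul_le_sqrt {g : ℝ → ℝ} (hg : Continuous g) (hg0 : ∀ y, 0 ≤ g y)
    {δ : ℝ} (hδ : 0 < δ) (hg2 : IntegrableOn (fun y => g y ^ 2 * exp (-δ * y)) (Ioi 0))
    {T : ℝ} (hT : 0 ≤ T) :
    ∫ s in (0:ℝ)..T, exp (-δ * s) * g s ≤ √(∫ y in Ioi 0, g y ^ 2 * exp (-δ * y)) / √δ := by
  have hhalf : ∀ s, exp (-(δ / 2) * s) ^ 2 = exp (-δ * s) := fun s => by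
    rw [← exp_nat_mul]; ring_nf
  have hmemLp : ∀ f : ℝ → ℝ, Continuous f → MemLp f 2 (volume.restrict (Ioc 0 T)) := fun f hf =>
    (memLp_two_iff_integrable_sq hf.aestronglyMeasurable).2 (hf.pow 2).integrableOn_Ioc
  rw [intervalIntegral.integral_of_le hT, div_eq_mul_inv, ← sqrt_inv]
  calc ∫ s in Ioc 0 T, exp (-δ * s) * g s
      = ∫ s in Ioc 0 T, (g s * exp (-(δ / 2) * s)) * exp (-(δ / 2) * s) := by
        simp_rw [mul_assoc, ← sq, hhalf, mul_comm]
    _ ≤ √(∫ s in Ioc 0 T, (g s * exp (-(δ / 2) * s)) ^ 2)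
          * √(∫ s in Ioc 0 T, exp (-(δ / 2) * s) ^ 2) :=
        integral_mul_le_sqrt_mul_sqrt (ae_of_all _ fun s => mul_nonneg (hg0 s) (exp_pos _).le)
          (ae_of_all _ fun s => (exp_pos _).le) (hmemLp _ (by fun_prop)) (hmemLp _ (by fun_prop))
    _ ≤ √(∫ y in Ioi 0, g y ^ 2 * exp (-δ * y)) * √δ⁻¹ := by
        simp_rw [mul_pow, hhalf]
        gcongr √?_ * √?_
        · exact setIntegral_mono_set hg2 (ae_of_all _ fun s => by positivity)
            Ioc_subset_Ioi_self.eventuallyLE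
        · calc ∫ s in Ioc 0 T, exp (-δ * s)
              ≤ ∫ s in Ioi 0, exp (-δ * s) :=
                setIntegral_mono_set (integrableOn_exp_mul_Ioi (neg_lt_zero.2 hδ) 0)
                  (ae_of_all _ fun s => (exp_pos _).le) Ioc_subset_Ioi_self.eventuallyLE
            _ = δ⁻¹ := by
                rw [integral_exp_mul_Ioi (neg_lt_zero.2 hδ) 0]
                simp

lemma intervalIntegral_exp_mul_primitive_le {g : ℝ → ℝ} (hg : Continuous g)
    (hg0 : ∀ y, 0 ≤ g y) {δ : ℝ} (hδ : 0 < δ)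
    (hg2 : IntegrableOn (fun y => g y ^ 2 * exp (-δ * y)) (Ioi 0)) {T : ℝ} (hT : 0 ≤ T) :
    ∫ s in (0:ℝ)..T, exp (-δ * s) * ∫ y in (0:ℝ)..s, g y
      ≤ √(∫ y in Ioi 0, g y ^ 2 * exp (-δ * y)) / δ ^ ((3:ℝ)/2) := by
  have hpow : δ ^ ((3:ℝ)/2) = δ * √δ := by
    rw [show (3:ℝ)/2 = 1 + 1/2 by norm_num, rpow_add hδ, rpow_one,
      ← sqrt_eq_rpow]
  rw [hpow, div_mul_eq_div_div_swap, le_div_iff₀ hδ, mul_comm]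
  exact (mul_intervalIntegral_exp_mul_primitive_le hg hg0 δ hT).trans
    (intervalIntegral_exp_mul_le_sqrt hg hg0 hδ hg2 hT)

lemma integrableOn_Ioi_and_norm_integral_le {E : Type*} [NormedAddCommGroup E]
    [NormedSpace ℝ E] {f : ℝ → E} {a I : ℝ} (hf : ∀ T, IntegrableOn f (Ioc a T))
    (hI : ∀ T, a ≤ T → ∫ x in a..T, ‖f x‖ ≤ I) :
    IntegrableOn f (Ioi a) ∧ ‖∫ x in Ioi a, f x‖ ≤ I := by
  have hint : IntegrableOn f (Ioi a) :=
    integrableOn_Ioi_of_intervalIntegral_norm_bounded I a hf tendsto_id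
      ((eventually_ge_atTop a).mono hI)
  refine ⟨hint, (norm_integral_le_integral_norm f).trans ?_⟩
  exact le_of_tendsto (intervalIntegral_tendsto_integral_Ioi a hint.norm tendsto_id)
    ((eventually_ge_atTop a).mono hI)

theorem stmt10_general (ν : ℝ → ℝ) (C δ : ℝ) (hδ : 0 < δ)
    (hsmooth : ContDiff ℝ 2 ν)
    (hbound : ∀ t : ℝ, 0 ≤ t → |deriv (deriv ν) t| ≤ C * Real.exp (-δ * t))
    (z : ℂ) (hz : 0 ≤ z.re) (R : ℝ → ℂ) (hR : Continuous R)
    (hRint : IntegrableOn (fun y : ℝ => ‖R y‖ ^ 2 * Real.exp (-δ * y)) (Set.Ioi 0)) :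
    IntegrableOn (fun s : ℝ =>
        ((deriv (deriv ν) s : ℝ) : ℂ) * ∫ y in (0:ℝ)..s, Complex.exp (-z * (s - y)) * R y)
      (Set.Ioi 0) ∧
    ‖∫ s in Set.Ioi (0:ℝ),
        ((deriv (deriv ν) s : ℝ) : ℂ) * ∫ y in (0:ℝ)..s, Complex.exp (-z * (s - y)) * R y‖
      ≤ (C / δ ^ ((3:ℝ)/2)) *
        Real.sqrt (∫ y in Set.Ioi (0:ℝ), ‖R y‖ ^ 2 * Real.exp (-δ * y)) := by
  have hν'' : Continuous (deriv (deriv ν)) := (hsmooth.deriv' (n := 1)).continuous_deriv_one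
  have hC : 0 ≤ C := by simpa using (abs_nonneg _).trans (hbound 0 le_rfl)
  have hF : Continuous fun s : ℝ =>
      ((deriv (deriv ν) s : ℝ) : ℂ) * ∫ y in (0:ℝ)..s, Complex.exp (-z * (s - y)) * R y := by
    refine (Complex.continuous_ofReal.comp hν'').mul
      (intervalIntegral.continuous_parametric_intervalIntegral_of_continuous ?_ continuous_id)
    fun_prop
  have hFle : ∀ s, 0 ≤ s → ‖((deriv (deriv ν) s : ℝ) : ℂ) *
      ∫ y in (0:ℝ)..s, Complex.exp (-z * (s - y)) * R y‖
        ≤ C * (exp (-δ * s) * ∫ y in (0:ℝ)..s, ‖R y‖) := fun s hs => by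
    rw [norm_mul, Complex.norm_real, ← mul_assoc]
    exact mul_le_mul (hbound s hs) (norm_intervalIntegral_cexp_neg_mul_sub_mul_le hz hs
      (hR.intervalIntegrable 0 s)) (norm_nonneg _) (by positivity)
  refine integrableOn_Ioi_and_norm_integral_le (fun T => hF.integrableOn_Ioc) fun T hT => ?_
  calc _ ≤ ∫ s in (0:ℝ)..T, C * (exp (-δ * s) * ∫ y in (0:ℝ)..s, ‖R y‖) :=
        intervalIntegral.integral_mono_on hT (hF.norm.intervalIntegrable 0 T)
          (Continuous.intervalIntegrable (by fun_prop) 0 T) fun s hs => hFle s hs.1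
    _ = C * ∫ s in (0:ℝ)..T, exp (-δ * s) * ∫ y in (0:ℝ)..s, ‖R y‖ :=
        intervalIntegral.integral_const_mul _ _
    _ ≤ C * (√(∫ y in Ioi 0, ‖R y‖ ^ 2 * exp (-δ * y)) / δ ^ ((3:ℝ)/2)) := by
        gcongr
        exact intervalIntegral_exp_mul_primitive_le hR.norm (fun y => norm_nonneg _) hδ hRint hT
    _ = _ := by ring

/-- For ν in the class K, Re λ ≥ 0 and R ∈ L²_w, the iterated integral
∫_0^∞ ν''(s) ∫_0^s e^{-λ(s-y)} R(y) dy ds converges absolutely with modulus at most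
(C/δ^{3/2}) ‖R‖_{L²_w}, where w(y) = e^{-δ y}. -/
theorem stmt10 (ν : ℝ → ℝ) (C δ : ℝ) (hC : 0 < C) (hδ : 0 < δ)
    (hsmooth : ContDiff ℝ 2 ν)
    (hlim : Tendsto (deriv ν) atTop (nhds 0))
    (hbound : ∀ t : ℝ, 0 ≤ t → |deriv (deriv ν) t| ≤ C * Real.exp (-δ * t))
    (z : ℂ) (hz : 0 ≤ z.re) (R : ℝ → ℂ) (hR : Continuous R)
    (hRint : IntegrableOn (fun y : ℝ => ‖R y‖ ^ 2 * Real.exp (-δ * y)) (Set.Ioi 0)) :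
    IntegrableOn (fun s : ℝ =>
        ((deriv (deriv ν) s : ℝ) : ℂ) * ∫ y in (0:ℝ)..s, Complex.exp (-z * (s - y)) * R y)
      (Set.Ioi 0) ∧
    ‖∫ s in Set.Ioi (0:ℝ),
        ((deriv (deriv ν) s : ℝ) : ℂ) * ∫ y in (0:ℝ)..s, Complex.exp (-z * (s - y)) * R y‖
      ≤ (C / δ ^ ((3:ℝ)/2)) *
        Real.sqrt (∫ y in Set.Ioi (0:ℝ), ‖R y‖ ^ 2 * Real.exp (-δ * y)) :=
  stmt10_general ν C δ hδ hsmooth hbound z hz R hR hRint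
end

section
/- Let ν belong to the class K and let E : [0,∞) → ℂ be continuous and bounded. Fix t ≥ 0 and define the summed past history η^t(s) = ∫_0^{min(s,t)} E(t-y) dy for s > 0. Then ∫_0^∞ ν''(s) η^t(s) ds converges absolutely and ∫_0^t ν'(t-s) E(s) ds = - ∫_0^∞ ν''(s) η^t(s) ds. -/
open MeasureTheory Filter

/-- For ν in the class K, E continuous and bounded, t ≥ 0 and the summed past
history η^t(s) = ∫_0^{min(s,t)} E(t-y) dy, the integral ∫_0^∞ ν''(s) η^t(s) ds converges
absolutely and ∫_0^t ν'(t-s) E(s) ds = -∫_0^∞ ν''(s) η^t(s) ds. -/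
theorem stmt12 (ν : ℝ → ℝ) (C δ : ℝ) (hC : 0 < C) (hδ : 0 < δ)
    (hsmooth : ContDiff ℝ 2 ν)
    (hlim : Tendsto (deriv ν) atTop (nhds 0))
    (hbound : ∀ t : ℝ, 0 ≤ t → |deriv (deriv ν) t| ≤ C * Real.exp (-δ * t))
    (E : ℝ → ℂ) (hE : Continuous E) (M : ℝ) (hEbd : ∀ s : ℝ, ‖E s‖ ≤ M)
    (t : ℝ) (ht : 0 ≤ t) (η : ℝ → ℂ)
    (hη : ∀ s : ℝ, η s = ∫ y in (0:ℝ)..(min s t), E (t - y)) :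
    IntegrableOn (fun s : ℝ => ((deriv (deriv ν) s : ℝ) : ℂ) * η s) (Set.Ioi 0) ∧
    ∫ s in (0:ℝ)..t, ((deriv ν (t - s) : ℝ) : ℂ) * E s
      = -∫ s in Set.Ioi (0:ℝ), ((deriv (deriv ν) s : ℝ) : ℂ) * η s := by
  have h1 : ContDiff ℝ 1 (deriv ν) :=
    ((contDiff_succ_iff_deriv (n := 1)).mp (by exact_mod_cast hsmooth)).2.2
  have hν'' : Continuous (deriv (deriv ν)) := h1.continuous_deriv le_rfl
  have hν' : Continuous (deriv ν) := h1.continuous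
  have hd' : ∀ x, HasDerivAt (deriv ν) (deriv (deriv ν) x) x :=
    fun x => ((h1.differentiable one_ne_zero) x).hasDerivAt
  have hgc : Continuous (fun y => E (t - y)) := hE.comp (continuous_const.sub continuous_id)
  set F : ℝ → ℂ := fun u => ∫ y in (0:ℝ)..u, E (t - y) with hFdef
  have hFd : ∀ s, HasDerivAt F (E (t - s)) s := fun s =>
    intervalIntegral.integral_hasDerivAt_right (hgc.intervalIntegrable _ _)
      (hgc.stronglyMeasurableAtFilter _ _) hgc.continuousAt
  have hFc : Continuous F := by
    have : Differentiable ℝ F := fun s => (hFd s).differentiableAt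
    exact this.continuous
  have hηF : ∀ s, s ≤ t → η s = F s := fun s hs => by rw [hη, min_eq_left hs]
  have hηconst : ∀ s, t ≤ s → η s = η t := fun s hs => by
    rw [hη, hη, min_eq_right hs, min_self]
  -- integrability of ν'' on tails
  have hν''int : ∀ a, 0 ≤ a → IntegrableOn (deriv (deriv ν)) (Set.Ioi a) := by
    intro a ha
    refine Integrable.mono' ((exp_neg_integrableOn_Ioi a hδ).const_mul C)
      (hν''.aestronglyMeasurable.restrict) ?_
    filter_upwards [ae_restrict_mem measurableSet_Ioi] with x hx
    have hx0 : 0 ≤ x := le_of_lt (lt_of_le_of_lt ha hx)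
    simpa [Real.norm_eq_abs] using hbound x hx0
  -- integrability on Ioc 0 t
  have hI1 : IntegrableOn (fun s : ℝ => ((deriv (deriv ν) s : ℝ) : ℂ) * η s) (Set.Ioc 0 t) := by
    have hcont : Continuous (fun s : ℝ => ((deriv (deriv ν) s : ℝ) : ℂ) * F s) :=
      (Complex.continuous_ofReal.comp hν'').mul hFc
    refine ((hcont.integrableOn_Icc (a := 0) (b := t)).mono_set
      Set.Ioc_subset_Icc_self).congr_fun ?_ measurableSet_Ioc
    intro s hs
    simp [hηF s hs.2]
  -- integrability on Ioi t
  have hI2 : IntegrableOn (fun s : ℝ => ((deriv (deriv ν) s : ℝ) : ℂ) * η s) (Set.Ioi t) := by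
    have hbase : IntegrableOn (fun s : ℝ => ((deriv (deriv ν) s : ℝ) : ℂ) * η t) (Set.Ioi t) :=
      ((hν''int t ht).ofReal).mul_const _
    refine hbase.congr_fun ?_ measurableSet_Ioi
    intro s hs
    simp [hηconst s (le_of_lt hs)]
  have hInt : IntegrableOn (fun s : ℝ => ((deriv (deriv ν) s : ℝ) : ℂ) * η s) (Set.Ioi 0) := by
    rw [← Set.Ioc_union_Ioi_eq_Ioi ht]
    exact hI1.union hI2
  refine ⟨hInt, ?_⟩
  -- split the integral
  have hsplit : ∫ s in Set.Ioi (0:ℝ), ((deriv (deriv ν) s : ℝ) : ℂ) * η s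
      = (∫ s in Set.Ioc (0:ℝ) t, ((deriv (deriv ν) s : ℝ) : ℂ) * η s)
        + ∫ s in Set.Ioi t, ((deriv (deriv ν) s : ℝ) : ℂ) * η s := by
    rw [← Set.Ioc_union_Ioi_eq_Ioi ht,
      setIntegral_union (Set.Ioc_disjoint_Ioi le_rfl) measurableSet_Ioi hI1 hI2]
  -- tail integral
  have hB : ∫ s in Set.Ioi t, ((deriv (deriv ν) s : ℝ) : ℂ) * η s
      = -((deriv ν t : ℝ) : ℂ) * η t := by
    have h0 : ∫ s in Set.Ioi t, deriv (deriv ν) s = 0 - deriv ν t :=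
      integral_Ioi_of_hasDerivAt_of_tendsto hν'.continuousWithinAt
        (fun x _ => hd' x) (hν''int t ht) hlim
    calc ∫ s in Set.Ioi t, ((deriv (deriv ν) s : ℝ) : ℂ) * η s
        = ∫ s in Set.Ioi t, ((deriv (deriv ν) s : ℝ) : ℂ) * η t :=
          setIntegral_congr_fun measurableSet_Ioi (fun s hs => by rw [hηconst s (le_of_lt hs)])
      _ = (∫ s in Set.Ioi t, ((deriv (deriv ν) s : ℝ) : ℂ)) * η t := by
          simpa using integral_mul_const (η t) (fun s => ((deriv (deriv ν) s : ℝ) : ℂ))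
      _ = (((∫ s in Set.Ioi t, deriv (deriv ν) s : ℝ)) : ℂ) * η t := by congr 1; exact integral_ofReal
      _ = -((deriv ν t : ℝ) : ℂ) * η t := by rw [h0]; push_cast; ring
  -- integration by parts on [0,t]
  have hA : ∫ s in Set.Ioc (0:ℝ) t, ((deriv (deriv ν) s : ℝ) : ℂ) * η s
      = ((deriv ν t : ℝ) : ℂ) * F t
        - ∫ s in (0:ℝ)..t, ((deriv ν s : ℝ) : ℂ) * E (t - s) := by
    rw [← intervalIntegral.integral_of_le ht]
    have hcongr : ∫ s in (0:ℝ)..t, ((deriv (deriv ν) s : ℝ) : ℂ) * η s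
        = ∫ s in (0:ℝ)..t, ((deriv (deriv ν) s : ℝ) : ℂ) * F s := by
      refine intervalIntegral.integral_congr (fun s hs => ?_)
      rw [Set.uIcc_of_le ht] at hs
      rw [hηF s hs.2]
    rw [hcongr]
    have ibp := intervalIntegral.integral_mul_deriv_eq_deriv_mul
      (u := fun s => ((deriv ν s : ℝ) : ℂ)) (u' := fun s => ((deriv (deriv ν) s : ℝ) : ℂ))
      (v := F) (v' := fun s => E (t - s)) (a := 0) (b := t)
      (fun x _ => (hd' x).ofReal_comp) (fun x _ => hFd x)
      ((Complex.continuous_ofReal.comp hν'').intervalIntegrable _ _)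
      (hgc.intervalIntegrable _ _)
    have hF0 : F 0 = 0 := intervalIntegral.integral_same
    rw [hF0] at ibp
    linear_combination ibp
  -- substitution
  have hsub : ∫ s in (0:ℝ)..t, ((deriv ν (t - s) : ℝ) : ℂ) * E s
      = ∫ s in (0:ℝ)..t, ((deriv ν s : ℝ) : ℂ) * E (t - s) := by
    have h := intervalIntegral.integral_comp_sub_left
      (fun s => ((deriv ν s : ℝ) : ℂ) * E (t - s)) t (a := 0) (b := t)
    simp only [sub_sub_cancel, sub_zero, sub_self] at h
    exact h
  rw [hsplit, hA, hB, hηF t le_rfl, hsub]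
  ring
end
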